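/- arXiv:1703.04841 — 7 statements merged into one kernel-verified Lean document; each statement's English description precedes it below -/
import Mathlib

section
/- Let U and V be k-dimensional subspaces of a Hilbert space H, and let S denote the unit sphere of H. Then max_{u ∈ U ∩ S} min_{v ∈ V ∩ S} ‖u − v‖ = max_{v ∈ V ∩ S} min_{u ∈ U ∩ S} ‖u − v‖; that is, the two one-sided Hausdorff distances between U ∩ S and V ∩ S coincide. -/
/-!
For unit vectors, `‖u - v‖² = 2 - 2⟪u, v⟫`, and among unit `v ∈ V` the inner product `⟪u, v⟫`
is largest in the direction of the orthogonal projection `P_V u`, so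
`min_v ‖u - v‖ = √(2 - 2‖P_V u‖)` and the left side is `√(2 - 2 min_{u ∈ U ∩ S} ‖P_V u‖)`.
It remains to show `min_{U ∩ S} ‖P_V ·‖ = min_{V ∩ S} ‖P_U ·‖`: these are the smallest singular
values of `P_V : U → V` and of its adjoint `P_U : V → U`. Given a unit `v ∈ V`, either
`P_V z = v` for some `z ∈ U`, and then `1 = ⟪z, P_U v⟫ ≤ ‖z‖ ‖P_U v‖` bounds `‖P_V (z / ‖z‖)‖`
by `‖P_U v‖`; or `P_V : U → V` is not onto, hence (as `dim U = dim V`) not injective, and the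
minimum on the left is `0`.
-/

open Module Submodule InnerProductSpace

lemma Submodule.inner_starProjection_left_of_mem {𝕜 E : Type*} [RCLike 𝕜] [NormedAddCommGroup E]
    [InnerProductSpace 𝕜 E] (K : Submodule 𝕜 E) [K.HasOrthogonalProjection] (u : E) {v : E}
    (hv : v ∈ K) : ⟪K.starProjection u, v⟫_𝕜 = ⟪u, v⟫_𝕜 := by
  rw [inner_starProjection_left_eq_right, starProjection_eq_self_iff.mpr hv]

lemma Submodule.inner_starProjection_right_of_mem {𝕜 E : Type*} [RCLike 𝕜]
    [NormedAddCommGroup E] [InnerProductSpace 𝕜 E] (K : Submodule 𝕜 E) [K.HasOrthogonalProjection]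
    {u : E} (hu : u ∈ K) (v : E) : ⟪u, K.starProjection v⟫_𝕜 = ⟪u, v⟫_𝕜 := by
  rw [← inner_starProjection_left_eq_right, starProjection_eq_self_iff.mpr hu]

section

variable {H : Type*} [NormedAddCommGroup H] [InnerProductSpace ℝ H]

local notation "𝕊[" K "]" => {x : H // x ∈ K ∧ ‖x‖ = 1}

lemma norm_sub_eq_sqrt_of_norm_eq_one {u v : H} (hu : ‖u‖ = 1) (hv : ‖v‖ = 1) :
    ‖u - v‖ = √(2 - 2 * ⟪u, v⟫_ℝ) := by
  rw [← Real.sqrt_sq (norm_nonneg _), norm_sub_sq_real, hu, hv]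
  ring_nf

lemma nonempty_unitSphere_iff (K : Submodule ℝ H) : Nonempty 𝕊[K] ↔ K ≠ ⊥ := by
  constructor
  · rintro ⟨x, hxK, hx⟩ rfl
    simp [(mem_bot ℝ).mp hxK] at hx
  · intro hK
    obtain ⟨x, hxK, hx⟩ := exists_mem_ne_zero_of_ne_bot hK
    exact ⟨⟨‖x‖⁻¹ • x, K.smul_mem _ hxK, norm_smul_inv_norm hx⟩⟩

lemma iInf_norm_sub_eq_sqrt (V : Submodule ℝ H) [V.HasOrthogonalProjection] [Nonempty 𝕊[V]]
    {u : H} (hu : ‖u‖ = 1) :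
    ⨅ v : 𝕊[V], ‖u - v‖ = √(2 - 2 * ‖V.starProjection u‖) := by
  set p := V.starProjection u
  have hinner (v : 𝕊[V]) : ⟪u, v⟫_ℝ = ⟪p, v⟫_ℝ :=
    (V.inner_starProjection_left_of_mem u v.2.1).symm
  have hle (v : 𝕊[V]) : ⟪u, v⟫_ℝ ≤ ‖p‖ := by
    simpa [hinner, v.2.2] using real_inner_le_norm p v
  obtain ⟨v₀, hv₀⟩ : ∃ v₀ : 𝕊[V], ⟪u, v₀⟫_ℝ = ‖p‖ := by
    by_cases hp : p = 0
    · exact ⟨Classical.arbitrary _, by simp [hinner, hp]⟩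
    · refine ⟨⟨‖p‖⁻¹ • p, V.smul_mem _ (V.starProjection_apply_mem u), norm_smul_inv_norm hp⟩, ?_⟩
      rw [hinner, real_inner_smul_right, real_inner_self_eq_norm_sq]
      field_simp
  have hnorm (v : 𝕊[V]) := norm_sub_eq_sqrt_of_norm_eq_one hu v.2.2
  refine le_antisymm ?_ (le_ciInf fun v => ?_)
  · exact (ciInf_le ⟨0, by rintro _ ⟨v, rfl⟩; positivity⟩ v₀).trans_eq (by rw [hnorm, hv₀])
  · rw [hnorm]
    exact Real.sqrt_le_sqrt (by linarith [hle v])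

lemma iSup_iInf_norm_sub_eq_sqrt (U V : Submodule ℝ H) [V.HasOrthogonalProjection]
    [Nonempty 𝕊[U]] [Nonempty 𝕊[V]] :
    ⨆ u : 𝕊[U], ⨅ v : 𝕊[V], ‖(u : H) - v‖ = √(2 - 2 * ⨅ u : 𝕊[U], ‖V.starProjection u‖) := by
  simp_rw [fun u : 𝕊[U] => iInf_norm_sub_eq_sqrt V u.2.2]
  exact (Antitone.map_ciInf_of_continuousAt (f := fun t : ℝ => √(2 - 2 * t)) (by fun_prop)
    (fun s t hst => Real.sqrt_le_sqrt (by linarith)) ⟨0, by rintro _ ⟨u, rfl⟩; positivity⟩).symm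

lemma exists_norm_starProjection_le (U V : Submodule ℝ H) [FiniteDimensional ℝ U]
    [FiniteDimensional ℝ V] (h : finrank ℝ U = finrank ℝ V) (v : 𝕊[V]) :
    ∃ u : 𝕊[U], ‖V.starProjection u‖ ≤ ‖U.starProjection v‖ := by
  obtain ⟨z, hzU, hz0, hz⟩ :
      ∃ z ∈ U, z ≠ 0 ∧ ‖V.starProjection z‖ ≤ ‖z‖ * ‖U.starProjection v‖ := by
    let T : U →ₗ[ℝ] V := (V.orthogonalProjectionOnto : H →ₗ[ℝ] V) ∘ₗ U.subtype
    by_cases hT : Function.Surjective T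
    · obtain ⟨z, hz⟩ := hT ⟨v, v.2.1⟩
      have hPz : V.starProjection z = v := congrArg Subtype.val hz
      refine ⟨z, z.2, fun h0 => ?_, ?_⟩
      · simpa [← hPz, h0] using v.2.2
      calc ‖V.starProjection z‖ = ⟪V.starProjection z, v⟫_ℝ := by
            rw [hPz, real_inner_self_eq_norm_sq, v.2.2, one_pow]
        _ = ⟪(z : H), U.starProjection v⟫_ℝ := by
            rw [V.inner_starProjection_left_of_mem _ v.2.1,
              U.inner_starProjection_right_of_mem z.2]
        _ ≤ ‖(z : H)‖ * ‖U.starProjection v‖ := real_inner_le_norm _ _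
    · obtain ⟨z, hzT, hz0⟩ := exists_mem_ne_zero_of_ne_bot
        (mt LinearMap.ker_eq_bot.mp (mt (T.injective_iff_surjective_of_finrank_eq_finrank h).mp hT))
      have hPz : V.starProjection z = 0 := congrArg Subtype.val (LinearMap.mem_ker.mp hzT)
      exact ⟨z, z.2, by simpa using hz0, by rw [hPz, norm_zero]; positivity⟩
  refine ⟨⟨‖z‖⁻¹ • z, U.smul_mem _ hzU, norm_smul_inv_norm hz0⟩, ?_⟩
  rw [map_smul, norm_smul, norm_inv, norm_norm, inv_mul_le_iff₀ (norm_pos_iff.mpr hz0)]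
  exact hz

lemma iInf_norm_starProjection_le (U V : Submodule ℝ H) [FiniteDimensional ℝ U]
    [FiniteDimensional ℝ V] [Nonempty 𝕊[V]] (h : finrank ℝ U = finrank ℝ V) :
    ⨅ u : 𝕊[U], ‖V.starProjection u‖ ≤ ⨅ v : 𝕊[V], ‖U.starProjection v‖ :=
  le_ciInf fun v =>
    let ⟨u, hu⟩ := exists_norm_starProjection_le U V h v
    (ciInf_le ⟨0, by rintro _ ⟨u, rfl⟩; positivity⟩ u).trans hu

lemma iInf_norm_starProjection_eq (U V : Submodule ℝ H) [FiniteDimensional ℝ U]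
    [FiniteDimensional ℝ V] [Nonempty 𝕊[U]] [Nonempty 𝕊[V]] (h : finrank ℝ U = finrank ℝ V) :
    ⨅ u : 𝕊[U], ‖V.starProjection u‖ = ⨅ v : 𝕊[V], ‖U.starProjection v‖ :=
  (iInf_norm_starProjection_le U V h).antisymm (iInf_norm_starProjection_le V U h.symm)

end

theorem stmt1 {H : Type*} [NormedAddCommGroup H] [InnerProductSpace ℝ H]
    (k : ℕ) (U V : Submodule ℝ H) [FiniteDimensional ℝ U] [FiniteDimensional ℝ V]
    (hU : Module.finrank ℝ U = k) (hV : Module.finrank ℝ V = k) :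
    (⨆ u : {x : H // x ∈ U ∧ ‖x‖ = 1}, ⨅ v : {x : H // x ∈ V ∧ ‖x‖ = 1},
        ‖(u : H) - (v : H)‖)
      = (⨆ v : {x : H // x ∈ V ∧ ‖x‖ = 1}, ⨅ u : {x : H // x ∈ U ∧ ‖x‖ = 1},
        ‖(u : H) - (v : H)‖) := by
  have hne (K : Submodule ℝ H) [FiniteDimensional ℝ K] (hK : finrank ℝ K = k) :
      Nonempty {x : H // x ∈ K ∧ ‖x‖ = 1} ↔ k ≠ 0 := by
    rw [nonempty_unitSphere_iff, ← hK, ne_eq, ne_eq, Submodule.finrank_eq_zero]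
  rcases eq_or_ne k 0 with hk | hk
  · have : IsEmpty {x : H // x ∈ U ∧ ‖x‖ = 1} := not_nonempty_iff.mp fun h => (hne U hU).mp h hk
    have : IsEmpty {x : H // x ∈ V ∧ ‖x‖ = 1} := not_nonempty_iff.mp fun h => (hne V hV).mp h hk
    simp only [Real.iSup_of_isEmpty]
  have := (hne U hU).mpr hk
  have := (hne V hV).mpr hk
  calc _ = √(2 - 2 * ⨅ u : {x : H // x ∈ U ∧ ‖x‖ = 1}, ‖V.starProjection u‖) :=
        iSup_iInf_norm_sub_eq_sqrt U V
    _ = √(2 - 2 * ⨅ v : {x : H // x ∈ V ∧ ‖x‖ = 1}, ‖U.starProjection v‖) := by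
        rw [iInf_norm_starProjection_eq U V (hU.trans hV.symm)]
    _ = _ := by
        rw [← iSup_iInf_norm_sub_eq_sqrt V U]
        exact iSup_congr fun v => iInf_congr fun u => norm_sub_rev _ _
end

section
/- Let H be a Hilbert space, U a closed subspace of codimension k, and V a subspace of dimension k. Define ⊥(U,V) = (1/√2) min{‖u − v‖ : u ∈ U, v ∈ V, ‖u‖ = ‖v‖ = 1}. Then the k-th singular value of the composition Π_{U^⊥} ∘ Π_V satisfies s_k(Π_{U^⊥} Π_V) ≥ ⊥(U,V); equivalently, ‖Π_{U^⊥} v‖ ≥ ⊥(U,V) · ‖v‖ for every v ∈ V. -/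
/-!
Split a unit vector `v ∈ V` as `v = a + b` with `a ∈ U`, `b ∈ Uᗮ`, so `‖a‖² + ‖b‖² = 1`.
A unit vector `u ∈ U` with `⟪u, v⟫ = ‖a‖` (the direction of `a`, or any unit vector if `a = 0`)
gives `‖u - v‖² = 2 - 2‖a‖ ≤ 2 - 2‖a‖² = 2‖b‖²`, so `√2 ⊥(U,V) ≤ ‖u - v‖ ≤ √2 ‖b‖`.
The bound for arbitrary `v ∈ V` follows by homogeneity.
-/

set_option synthInstance.maxHeartbeats 1000000

/-- `⊥(U,V)`: transversality measure between subspaces `U` and `V` of a Hilbert space. -/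
noncomputable def perpDist {H : Type*} [NormedAddCommGroup H] [InnerProductSpace ℝ H]
    (U V : Submodule ℝ H) : ℝ :=
  (1 / Real.sqrt 2) *
    sInf {d : ℝ | ∃ u ∈ U, ∃ v ∈ V, ‖u‖ = 1 ∧ ‖v‖ = 1 ∧ d = ‖u - v‖}

open scoped InnerProductSpace

section

variable {H : Type*} [NormedAddCommGroup H] [InnerProductSpace ℝ H]

lemma perpDist_bot_left (V : Submodule ℝ H) : perpDist ⊥ V = 0 := by
  have hempty : {d : ℝ | ∃ u ∈ (⊥ : Submodule ℝ H), ∃ v ∈ V,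
      ‖u‖ = 1 ∧ ‖v‖ = 1 ∧ d = ‖u - v‖} = ∅ := by
    ext d
    simp
  rw [perpDist, hempty, Real.sInf_empty, mul_zero]

lemma perpDist_le_of_norm_sub_sq_le {U V : Submodule ℝ H} {u v : H} {c : ℝ}
    (hu : u ∈ U) (hv : v ∈ V) (hu1 : ‖u‖ = 1) (hv1 : ‖v‖ = 1) (hc : 0 ≤ c)
    (huv : ‖u - v‖ ^ 2 ≤ 2 * c ^ 2) : perpDist U V ≤ c := by
  have hsqrt2 : (0 : ℝ) < √2 := by positivity
  have hinf : sInf {d : ℝ | ∃ u ∈ U, ∃ v ∈ V, ‖u‖ = 1 ∧ ‖v‖ = 1 ∧ d = ‖u - v‖} ≤ ‖u - v‖ :=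
    csInf_le ⟨0, by rintro _ ⟨_, _, _, _, _, _, rfl⟩; positivity⟩ ⟨u, hu, v, hv, hu1, hv1, rfl⟩
  have hdist : ‖u - v‖ ≤ √2 * c := by
    refine (pow_le_pow_iff_left₀ (norm_nonneg _) (by positivity) two_ne_zero).mp ?_
    rwa [mul_pow, Real.sq_sqrt zero_le_two]
  rw [perpDist, one_div, inv_mul_le_iff₀ hsqrt2]
  exact hinf.trans hdist

lemma Submodule.exists_norm_eq_one_inner_eq_norm {U : Submodule ℝ H} (hU : U ≠ ⊥) {x : H}
    (hx : x ∈ U) : ∃ u ∈ U, ‖u‖ = 1 ∧ ⟪u, x⟫_ℝ = ‖x‖ := by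
  rcases eq_or_ne x 0 with rfl | hx0
  · have : Nontrivial U := Submodule.nontrivial_iff_ne_bot.mpr hU
    obtain ⟨u, hu1⟩ := exists_norm_eq U zero_le_one
    exact ⟨u, u.2, hu1, by simp⟩
  · refine ⟨‖x‖⁻¹ • x, U.smul_mem _ hx, norm_smul_inv_norm hx0, ?_⟩
    rw [real_inner_smul_left, real_inner_self_eq_norm_sq]
    field_simp

lemma perpDist_le_norm_starProjection_orthogonal (U : Submodule ℝ H) [U.HasOrthogonalProjection]
    (V : Submodule ℝ H) {v : H} (hv : v ∈ V) (hv1 : ‖v‖ = 1) :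
    perpDist U V ≤ ‖Uᗮ.starProjection v‖ := by
  rcases eq_or_ne U ⊥ with rfl | hU
  · rw [perpDist_bot_left]
    exact norm_nonneg _
  set a := U.starProjection v
  obtain ⟨u, hu, hu1, hua⟩ :=
    Submodule.exists_norm_eq_one_inner_eq_norm hU (U.starProjection_apply_mem v)
  have hpyth : ‖a‖ ^ 2 + ‖Uᗮ.starProjection v‖ ^ 2 = 1 := by
    rw [← U.norm_sq_eq_add_norm_sq_starProjection v, hv1, one_pow]
  have huv : ⟪u, v⟫_ℝ = ‖a‖ := by
    rw [← U.starProjection_eq_self_iff.mpr hu, U.inner_starProjection_left_eq_right, hua]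
  refine perpDist_le_of_norm_sub_sq_le hu hv hu1 hv1 (norm_nonneg _) ?_
  have ha1 : ‖a‖ ≤ 1 := by nlinarith [norm_nonneg a, norm_nonneg (Uᗮ.starProjection v)]
  rw [norm_sub_sq_real, huv, hu1, hv1]
  nlinarith [norm_nonneg a]

lemma perpDist_mul_norm_le_norm_starProjection_orthogonal (U : Submodule ℝ H)
    [U.HasOrthogonalProjection] (V : Submodule ℝ H) {v : H} (hv : v ∈ V) :
    perpDist U V * ‖v‖ ≤ ‖Uᗮ.starProjection v‖ := by
  rcases eq_or_ne v 0 with rfl | hv0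
  · simp
  have hv_pos : 0 < ‖v‖ := norm_pos_iff.mpr hv0
  have hunit := perpDist_le_norm_starProjection_orthogonal U V (V.smul_mem ‖v‖⁻¹ hv)
    (norm_smul_inv_norm hv0)
  rw [map_smul, norm_smul, norm_inv, norm_norm, le_inv_mul_iff₀ hv_pos] at hunit
  rwa [mul_comm]

end

theorem stmt2_general {H : Type*} [NormedAddCommGroup H] [InnerProductSpace ℝ H] [CompleteSpace H]
    (U V : Submodule ℝ H) (hUc : IsClosed (U : Set H)) :
    ∀ v ∈ V, ‖(Submodule.orthogonalProjection Uᗮ v : H)‖ ≥ perpDist U V * ‖v‖ := by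
  have : CompleteSpace U := hUc.completeSpace_coe
  exact fun v hv ↦ perpDist_mul_norm_le_norm_starProjection_orthogonal U V hv

theorem stmt2 {H : Type*} [NormedAddCommGroup H] [InnerProductSpace ℝ H] [CompleteSpace H]
    (k : ℕ) (U V : Submodule ℝ H) (hUc : IsClosed (U : Set H))
    [FiniteDimensional ℝ (Uᗮ : Submodule ℝ H)] (hU : Module.finrank ℝ (Uᗮ : Submodule ℝ H) = k)
    [FiniteDimensional ℝ V] (hV : Module.finrank ℝ V = k) :
    ∀ v ∈ V, ‖(Submodule.orthogonalProjection Uᗮ v : H)‖ ≥ perpDist U V * ‖v‖ :=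
  stmt2_general U V hUc
end

section
/- For closed subspaces U', U of codimension k and V, V' of dimension k in a Hilbert space H, one has the reverse triangle inequality ⊥(U',V') ≥ ⊥(U,V) − ∠(V,V') − ∠(U,U'), where ∠ denotes the Hausdorff distance between intersections of subspaces with the unit sphere and ⊥(U,V) = (1/√2) min{‖u − v‖ : u ∈ U ∩ S, v ∈ V ∩ S}. -/
/-!
`⊥(U,V)` is `2^{-1/2}` times the distance between the unit spheres of `U` and `V`. Replacing
each of two sets by one within Hausdorff distance `δ` of it changes the distance between them
by at most the sum of the two `δ`s (triangle inequality), and the factor `2^{-1/2} ≤ 1` only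
helps. The one subtlety is an empty sphere, whose Hausdorff distance to a nonempty one is a
junk `0`: the dimension hypotheses give `U = ⊥ ↔ U' = ⊥` and `V = ⊥ ↔ V' = ⊥` when `k > 0`,
while for `k = 0` both `⊥`-terms are `perpDist _ ⊥ = 0`.
-/

/-- `∠(U,V)`: the Hausdorff distance between the intersections of the subspaces
`U` and `V` with the unit sphere of `H`. -/
noncomputable def angleDist {H : Type*} [NormedAddCommGroup H] [InnerProductSpace ℝ H]
    (U V : Submodule ℝ H) : ℝ :=
  Metric.hausdorffDist ((U : Set H) ∩ Metric.sphere (0 : H) 1)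
    ((V : Set H) ∩ Metric.sphere (0 : H) 1)

open Metric Set

section SetDist

variable {X : Type*} [PseudoMetricSpace X]

lemma sInf_image2_dist_le_infDist_add_dist_add_infDist (A B : Set X) (x y : X) :
    sInf (image2 dist A B) ≤ infDist x A + dist x y + infDist y B := by
  have hnonneg : 0 ≤ infDist x A + dist x y + infDist y B :=
    add_nonneg (add_nonneg infDist_nonneg dist_nonneg) infDist_nonneg
  rcases A.eq_empty_or_nonempty with rfl | hA
  · simpa using hnonneg
  rcases B.eq_empty_or_nonempty with rfl | hB
  · simpa using hnonneg
  have hbdd : BddBelow (image2 dist A B) :=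
    ⟨0, forall_mem_image2.2 fun _ _ _ _ => dist_nonneg⟩
  refine le_of_forall_pos_lt_add fun ε hε => ?_
  obtain ⟨a, ha, hxa⟩ := (infDist_lt_iff hA).1 (lt_add_of_pos_right (infDist x A) (half_pos hε))
  obtain ⟨b, hb, hyb⟩ := (infDist_lt_iff hB).1 (lt_add_of_pos_right (infDist y B) (half_pos hε))
  calc sInf (image2 dist A B) ≤ dist a b := csInf_le hbdd (mem_image2_of_mem ha hb)
    _ ≤ dist a x + dist x y + dist y b := dist_triangle4 a x y b
    _ < infDist x A + dist x y + infDist y B + ε := by rw [dist_comm a x]; linarith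

lemma sInf_image2_dist_le_add_hausdorffDist {A A' B B' : Set X}
    (hA : hausdorffEDist A A' ≠ ⊤) (hB : hausdorffEDist B B' ≠ ⊤) :
    sInf (image2 dist A B) ≤
      sInf (image2 dist A' B') + hausdorffDist A A' + hausdorffDist B B' := by
  have hnonneg : 0 ≤ hausdorffDist A A' + hausdorffDist B B' :=
    add_nonneg hausdorffDist_nonneg hausdorffDist_nonneg
  rcases empty_or_nonempty_of_hausdorffEDist_ne_top hA with ⟨rfl, rfl⟩ | ⟨-, hA'ne⟩
  · simpa using hnonneg
  rcases empty_or_nonempty_of_hausdorffEDist_ne_top hB with ⟨rfl, rfl⟩ | ⟨-, hB'ne⟩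
  · simpa using hnonneg
  have hA' : hausdorffEDist A' A ≠ ⊤ := by rwa [hausdorffEDist_comm]
  have hB' : hausdorffEDist B' B ≠ ⊤ := by rwa [hausdorffEDist_comm]
  have hlower : ∀ d ∈ image2 dist A' B',
      sInf (image2 dist A B) - hausdorffDist A A' - hausdorffDist B B' ≤ d := by
    refine forall_mem_image2.2 fun a' ha' b' hb' => ?_
    have hvia := sInf_image2_dist_le_infDist_add_dist_add_infDist A B a' b'
    have ha'A := infDist_le_hausdorffDist_of_mem ha' hA'
    have hb'B := infDist_le_hausdorffDist_of_mem hb' hB'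
    rw [hausdorffDist_comm (s := A), hausdorffDist_comm (s := B)]
    linarith
  linarith [le_csInf (hA'ne.image2 hB'ne) hlower]

end SetDist

section NormedSpace

variable {E : Type*} [NormedAddCommGroup E] [NormedSpace ℝ E]

lemma Submodule.inter_sphere_nonempty {W : Submodule ℝ E} (hW : W ≠ ⊥) :
    ((W : Set E) ∩ sphere 0 1).Nonempty := by
  obtain ⟨v, hv, hv0⟩ := (Submodule.ne_bot_iff W).1 hW
  exact ⟨(‖v‖⁻¹ : ℝ) • v, W.smul_mem _ hv, by simpa using norm_smul_inv_norm (𝕜 := ℝ) hv0⟩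

lemma Submodule.hausdorffEDist_inter_sphere_ne_top {W W' : Submodule ℝ E}
    (h : W = ⊥ ↔ W' = ⊥) :
    hausdorffEDist ((W : Set E) ∩ sphere 0 1) ((W' : Set E) ∩ sphere 0 1) ≠ ⊤ := by
  by_cases hW : W = ⊥
  · rw [hW, h.1 hW, hausdorffEDist_self]
    exact ENNReal.zero_ne_top
  · exact hausdorffEDist_ne_top_of_nonempty_of_bounded
      (Submodule.inter_sphere_nonempty hW) (Submodule.inter_sphere_nonempty (h.not.1 hW))
      (isBounded_sphere.subset inter_subset_right) (isBounded_sphere.subset inter_subset_right)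

end NormedSpace

section InnerProductSpace

variable {H : Type*} [NormedAddCommGroup H] [InnerProductSpace ℝ H]

lemma perpDist_eq_sInf_image2_dist (U V : Submodule ℝ H) :
    perpDist U V = (1 / Real.sqrt 2) *
      sInf (image2 dist ((U : Set H) ∩ sphere 0 1) ((V : Set H) ∩ sphere 0 1)) := by
  rw [perpDist]
  congr 2
  ext d
  simp only [mem_ofPred_eq, mem_image2, mem_inter_iff, SetLike.mem_coe, mem_sphere_iff_norm,
    sub_zero, dist_eq_norm]
  constructor
  · rintro ⟨u, hu, v, hv, hu1, hv1, rfl⟩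
    exact ⟨u, ⟨hu, hu1⟩, v, ⟨hv, hv1⟩, rfl⟩
  · rintro ⟨u, ⟨hu, hu1⟩, v, ⟨hv, hv1⟩, rfl⟩
    exact ⟨u, hu, v, hv, hu1, hv1, rfl⟩

lemma angleDist_nonneg (U V : Submodule ℝ H) : 0 ≤ angleDist U V :=
  hausdorffDist_nonneg

lemma perpDist_bot_right (U : Submodule ℝ H) : perpDist U ⊥ = 0 := by
  simp [perpDist_eq_sInf_image2_dist]

lemma perpDist_le_perpDist_add_angleDist {U U' V V' : Submodule ℝ H}
    (hU : U = ⊥ ↔ U' = ⊥) (hV : V = ⊥ ↔ V' = ⊥) :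
    perpDist U V ≤ perpDist U' V' + angleDist U U' + angleDist V V' := by
  have hset : sInf (image2 dist ((U : Set H) ∩ sphere 0 1) ((V : Set H) ∩ sphere 0 1)) ≤
      sInf (image2 dist ((U' : Set H) ∩ sphere 0 1) ((V' : Set H) ∩ sphere 0 1)) +
        angleDist U U' + angleDist V V' :=
    sInf_image2_dist_le_add_hausdorffDist (Submodule.hausdorffEDist_inter_sphere_ne_top hU)
      (Submodule.hausdorffEDist_inter_sphere_ne_top hV)
  have hc₀ : 0 ≤ 1 / Real.sqrt 2 := by positivity
  have hc₁ : 1 / Real.sqrt 2 ≤ 1 := by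
    rw [div_le_one (by positivity)]; exact Real.one_lt_sqrt_two.le
  have hUU' := angleDist_nonneg U U'
  have hVV' := angleDist_nonneg V V'
  rw [perpDist_eq_sInf_image2_dist, perpDist_eq_sInf_image2_dist]
  nlinarith [mul_le_mul_of_nonneg_left hset hc₀]

lemma Submodule.eq_bot_of_finrank_orthogonal_eq_finrank {K : Submodule ℝ H}
    (hpos : 0 < Module.finrank ℝ H) (h : Module.finrank ℝ Kᗮ = Module.finrank ℝ H) :
    K = ⊥ := by
  have := Module.finite_of_finrank_pos hpos
  exact (Submodule.orthogonal_eq_top_iff K).1 (Submodule.eq_top_of_finrank_eq h)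

lemma Submodule.eq_bot_iff_of_finrank_orthogonal_eq {U U' : Submodule ℝ H}
    (h : Module.finrank ℝ Uᗮ = Module.finrank ℝ U'ᗮ) (hpos : 0 < Module.finrank ℝ Uᗮ) :
    U = ⊥ ↔ U' = ⊥ := by
  have key : ∀ {K K' : Submodule ℝ H}, Module.finrank ℝ Kᗮ = Module.finrank ℝ K'ᗮ →
      0 < Module.finrank ℝ Kᗮ → K = ⊥ → K' = ⊥ := by
    rintro K K' h hpos rfl
    rw [Submodule.bot_orthogonal_eq_top, finrank_top] at h hpos
    exact Submodule.eq_bot_of_finrank_orthogonal_eq_finrank hpos h.symm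
  exact ⟨key h hpos, key h.symm (h ▸ hpos)⟩

end InnerProductSpace

theorem stmt5_general {H : Type*} [NormedAddCommGroup H] [InnerProductSpace ℝ H]
    (k : ℕ) (U U' V V' : Submodule ℝ H)
    (hU : Module.finrank ℝ (Uᗮ : Submodule ℝ H) = k)
    (hU' : Module.finrank ℝ (U'ᗮ : Submodule ℝ H) = k)
    [FiniteDimensional ℝ V] [FiniteDimensional ℝ V']
    (hV : Module.finrank ℝ V = k) (hV' : Module.finrank ℝ V' = k) :
    perpDist U' V' ≥ perpDist U V - angleDist V V' - angleDist U U' := by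
  rcases Nat.eq_zero_or_pos k with rfl | hk
  · obtain rfl := Submodule.finrank_eq_zero.1 hV
    obtain rfl := Submodule.finrank_eq_zero.1 hV'
    rw [perpDist_bot_right, perpDist_bot_right]
    linarith [angleDist_nonneg U U', angleDist_nonneg (⊥ : Submodule ℝ H) ⊥]
  · have hUbot := Submodule.eq_bot_iff_of_finrank_orthogonal_eq (hU.trans hU'.symm) (hU ▸ hk)
    have hVbot : V = ⊥ ↔ V' = ⊥ := by
      rw [← Submodule.finrank_eq_zero, hV, ← hV', Submodule.finrank_eq_zero]
    linarith [perpDist_le_perpDist_add_angleDist hUbot hVbot]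

theorem stmt5 {H : Type*} [NormedAddCommGroup H] [InnerProductSpace ℝ H] [CompleteSpace H]
    (k : ℕ) (U U' V V' : Submodule ℝ H)
    (hUc : IsClosed (U : Set H)) (hU'c : IsClosed (U' : Set H))
    (hU : Module.finrank ℝ (Uᗮ : Submodule ℝ H) = k)
    (hU' : Module.finrank ℝ (U'ᗮ : Submodule ℝ H) = k)
    [FiniteDimensional ℝ V] [FiniteDimensional ℝ V']
    (hV : Module.finrank ℝ V = k) (hV' : Module.finrank ℝ V' = k) :
    perpDist U' V' ≥ perpDist U V - angleDist V V' - angleDist U U' :=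
  stmt5_general k U U' V V' hU hU' hV hV'
end

section
/- There exists a constant C > 0 such that for every complex number z, | ∫_{-∞}^{∞} (e^{−x²/2}/√(2π)) log|x − z| dx − log⁺|z| | ≤ C, where log⁺|z| = max(log|z|, 0). -/
/-!
Pointwise, `log⁺` is subadditive up to `log 2` and `log = log⁺ - log⁺ ∘ inv`, which together with
`|x - Re z| ≤ ‖x - z‖` gives
`log⁺ ‖z‖ - log 2 - |x| - log⁺ |x - Re z|⁻¹ ≤ log ‖x - z‖ ≤ log⁺ ‖z‖ + log 2 + |x|`.
Integrating against a density `ρ`, the `|x|` terms give the first absolute moment of `ρ`, and the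
pole term contributes at most `sup ρ * ∫ log⁺ |u|⁻¹ du`, which is finite and independent of `z`
because `log` is locally integrable.
-/

open MeasureTheory Real ProbabilityTheory

lemma posLog_le_abs (x : ℝ) : log⁺ x ≤ |x| := by
  rw [posLog_apply, ← log_abs]
  exact max_le (abs_nonneg x) (log_le_self (abs_nonneg x))

lemma log_norm_ofReal_sub_le (z : ℂ) (x : ℝ) : log ‖(x : ℂ) - z‖ ≤ log 2 + log⁺ ‖z‖ + |x| :=
  calc log ‖(x : ℂ) - z‖ ≤ log⁺ ‖(x : ℂ) - z‖ := le_max_right _ _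
    _ ≤ log⁺ (‖z‖ + |x|) := posLog_le_posLog (norm_nonneg _) <| by
        simpa [add_comm] using norm_sub_le (x : ℂ) z
    _ ≤ log 2 + log⁺ ‖z‖ + log⁺ |x| := posLog_add
    _ ≤ log 2 + log⁺ ‖z‖ + |x| := by rw [posLog_abs]; linarith [posLog_le_abs x]

lemma le_log_norm_ofReal_sub (z : ℂ) {x : ℝ} (hx : x ≠ z.re) :
    log⁺ ‖z‖ - log 2 - |x| - log⁺ (x - z.re)⁻¹ ≤ log ‖(x : ℂ) - z‖ := by
  have hre : |x - z.re| ≤ ‖(x : ℂ) - z‖ := by simpa using Complex.abs_re_le_norm ((x : ℂ) - z)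
  have hpos : 0 < |x - z.re| := abs_pos.2 (sub_ne_zero.2 hx)
  have hz : log⁺ ‖z‖ ≤ log 2 + log⁺ ‖(x : ℂ) - z‖ + |x| :=
    calc log⁺ ‖z‖ ≤ log⁺ (‖(x : ℂ) - z‖ + |x|) := posLog_le_posLog (norm_nonneg _) <| by
          simpa [add_comm] using norm_sub_le (x : ℂ) ((x : ℂ) - z)
      _ ≤ log 2 + log⁺ ‖(x : ℂ) - z‖ + log⁺ |x| := posLog_add
      _ ≤ log 2 + log⁺ ‖(x : ℂ) - z‖ + |x| := by rw [posLog_abs]; linarith [posLog_le_abs x]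
  have hinv : log⁺ ‖(x : ℂ) - z‖⁻¹ ≤ log⁺ (x - z.re)⁻¹ := by
    rw [← posLog_abs (x - z.re)⁻¹, abs_inv]
    exact posLog_le_posLog (by positivity) (inv_anti₀ hpos hre)
  linarith [posLog_sub_posLog_inv (x := ‖(x : ℂ) - z‖)]

lemma integrable_posLog_inv : Integrable fun u : ℝ => log⁺ u⁻¹ := by
  have hsupp : (Function.support fun u : ℝ => log⁺ u⁻¹) ⊆ Set.Icc (-1) 1 := by
    intro u hu
    rw [Function.mem_support, ne_eq, posLog_eq_zero_iff, abs_inv, not_le, one_lt_inv_iff₀] at hu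
    exact abs_le.1 hu.2.le
  rw [← integrableOn_iff_integrable_of_support_subset hsupp]
  refine Integrable.mono'
    ((intervalIntegrable_iff_integrableOn_Icc_of_le (by norm_num)).1
      intervalIntegral.intervalIntegrable_log'.norm)
    (by fun_prop) (ae_of_all _ fun u => ?_)
  rw [norm_of_nonneg posLog_nonneg, posLog_apply, log_inv, Real.norm_eq_abs]
  exact max_le (abs_nonneg _) (neg_le_abs _)

section Density

variable {ρ : ℝ → ℝ} {M : ℝ}

lemma integrable_mul_posLog_inv_sub (hρ_nonneg : ∀ x, 0 ≤ ρ x) (hρ_le : ∀ x, ρ x ≤ M)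
    (hρ : AEStronglyMeasurable ρ) (t : ℝ) : Integrable fun x => ρ x * log⁺ (x - t)⁻¹ :=
  have hpole : Integrable fun x => log⁺ (x - t)⁻¹ := integrable_posLog_inv.comp_sub_right t
  (hpole.const_mul M).mono' (hρ.mul hpole.aestronglyMeasurable) <| ae_of_all _ fun x => by
    rw [norm_of_nonneg (mul_nonneg (hρ_nonneg x) posLog_nonneg)]
    exact mul_le_mul_of_nonneg_right (hρ_le x) posLog_nonneg

lemma integral_mul_posLog_inv_sub_le (hρ_nonneg : ∀ x, 0 ≤ ρ x) (hρ_le : ∀ x, ρ x ≤ M)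
    (hρ : AEStronglyMeasurable ρ) (t : ℝ) :
    ∫ x, ρ x * log⁺ (x - t)⁻¹ ≤ M * ∫ u, log⁺ u⁻¹ := by
  rw [← integral_sub_right_eq_self (fun u => log⁺ u⁻¹) t, ← integral_const_mul]
  exact integral_mono (integrable_mul_posLog_inv_sub hρ_nonneg hρ_le hρ t)
    ((integrable_posLog_inv.comp_sub_right t).const_mul M)
    fun x => mul_le_mul_of_nonneg_right (hρ_le x) posLog_nonneg

theorem abs_integral_mul_log_norm_ofReal_sub_sub_posLog_le
    (hρ_nonneg : ∀ x, 0 ≤ ρ x) (hρ_le : ∀ x, ρ x ≤ M) (hρ : Integrable ρ)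
    (hρ_one : ∫ x, ρ x = 1) (hρ_moment : Integrable fun x => ρ x * |x|) (z : ℂ) :
    |(∫ x, ρ x * log ‖(x : ℂ) - z‖) - log⁺ ‖z‖| ≤
      log 2 + (∫ x, ρ x * |x|) + M * ∫ u, log⁺ u⁻¹ := by
  have hpole_weighted := integrable_mul_posLog_inv_sub hρ_nonneg hρ_le hρ.aestronglyMeasurable z.re
  have hlow_int : Integrable fun x =>
      (log⁺ ‖z‖ - log 2) * ρ x - ρ x * |x| - ρ x * log⁺ (x - z.re)⁻¹ :=
    ((hρ.const_mul _).sub hρ_moment).sub hpole_weighted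
  have hup_int : Integrable fun x => (log 2 + log⁺ ‖z‖) * ρ x + ρ x * |x| :=
    (hρ.const_mul _).add hρ_moment
  have hlow : ∀ᵐ x, (log⁺ ‖z‖ - log 2) * ρ x - ρ x * |x| - ρ x * log⁺ (x - z.re)⁻¹ ≤
      ρ x * log ‖(x : ℂ) - z‖ := by
    filter_upwards [Measure.ae_ne volume z.re] with x hx
    have := mul_le_mul_of_nonneg_left (le_log_norm_ofReal_sub z hx) (hρ_nonneg x)
    linarith
  have hup : ∀ x, ρ x * log ‖(x : ℂ) - z‖ ≤ (log 2 + log⁺ ‖z‖) * ρ x + ρ x * |x| := fun x => by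
    have := mul_le_mul_of_nonneg_left (log_norm_ofReal_sub_le z x) (hρ_nonneg x)
    linarith
  have hint : Integrable fun x => ρ x * log ‖(x : ℂ) - z‖ :=
    integrable_of_le_of_le
      (hρ.aestronglyMeasurable.mul (measurable_log.comp (by fun_prop)).aestronglyMeasurable)
      hlow (ae_of_all _ hup) hlow_int hup_int
  have hlower := integral_mono_ae hlow_int hint hlow
  have hupper := integral_mono hint hup_int hup
  rw [integral_sub (f := fun x => (log⁺ ‖z‖ - log 2) * ρ x - ρ x * |x|)
      ((hρ.const_mul _).sub hρ_moment) hpole_weighted,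
    integral_sub (hρ.const_mul _) hρ_moment, integral_const_mul, hρ_one] at hlower
  rw [integral_add (hρ.const_mul _) hρ_moment, integral_const_mul, hρ_one] at hupper
  have hpole_nonneg : 0 ≤ ∫ x, ρ x * log⁺ (x - z.re)⁻¹ :=
    integral_nonneg fun x => mul_nonneg (hρ_nonneg x) posLog_nonneg
  have hpole_le := integral_mul_posLog_inv_sub_le hρ_nonneg hρ_le hρ.aestronglyMeasurable z.re
  rw [abs_le]
  constructor <;> linarith

end Density

lemma gaussianPDFReal_le (μ : ℝ) (v : NNReal) (x : ℝ) :
    gaussianPDFReal μ v x ≤ (√(2 * π * v))⁻¹ := by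
  rw [gaussianPDFReal]
  refine mul_le_of_le_one_right (by positivity) (exp_le_one_iff.2 ?_)
  exact div_nonpos_of_nonpos_of_nonneg (neg_nonpos.2 (sq_nonneg _)) (by positivity)

lemma gaussianPDFReal_zero_one (x : ℝ) :
    gaussianPDFReal 0 1 x = exp (-x ^ 2 / 2) / √(2 * π) := by
  simp [gaussianPDFReal, div_eq_inv_mul]

lemma integrable_gaussianPDFReal_zero_one_mul_abs :
    Integrable fun x => gaussianPDFReal 0 1 x * |x| := by
  refine ((integrable_mul_exp_neg_mul_sq (b := 1 / 2) (by norm_num)).norm.const_mul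
    (√(2 * π))⁻¹).congr (ae_of_all _ fun x => ?_)
  simp only [gaussianPDFReal_zero_one, norm_mul, Real.norm_eq_abs, abs_exp]
  ring_nf

theorem stmt8 :
    ∃ C : ℝ, 0 < C ∧ ∀ z : ℂ,
      |(∫ x : ℝ, (Real.exp (-x ^ 2 / 2) / Real.sqrt (2 * Real.pi)) *
          Real.log ‖(x : ℂ) - z‖) -
        max (Real.log ‖z‖) 0| ≤ C := by
  have hmoment : 0 ≤ ∫ x, gaussianPDFReal 0 1 x * |x| :=
    integral_nonneg fun x => mul_nonneg (gaussianPDFReal_nonneg 0 1 x) (abs_nonneg x)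
  have hpole : 0 ≤ ∫ u : ℝ, log⁺ u⁻¹ := integral_nonneg fun _ => posLog_nonneg
  refine ⟨log 2 + (∫ x, gaussianPDFReal 0 1 x * |x|) +
    (√(2 * π * (1 : NNReal)))⁻¹ * ∫ u : ℝ, log⁺ u⁻¹, by positivity, fun z => ?_⟩
  have := abs_integral_mul_log_norm_ofReal_sub_sub_posLog_le (gaussianPDFReal_nonneg 0 1)
    (gaussianPDFReal_le 0 1) (integrable_gaussianPDFReal 0 1)
    (integral_gaussianPDFReal_eq_one 0 one_ne_zero) integrable_gaussianPDFReal_zero_one_mul_abs z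
  simpa only [gaussianPDFReal_zero_one, posLog_apply, max_comm] using this
end

section
/- For every interval J ⊆ ℝ of positive length, (1/|J|) ∫_J log⁻|x| dx ≥ 2(max_{x ∈ J} log⁻|x| − 1), where log⁻ y = min(log y, 0) for y > 0 and log⁻ 0 = −∞ is not attained on a set of positive measure. -/
open Real Set

/-!
On `[a, b]` we have `|x| ≤ M := max |a| |b|`, so `log⁺ |x| ≤ log⁺ M` and
`min (log |x|) 0 = log |x| - log⁺ |x| ≥ log |x| - log⁺ M`. The integral of `log |x|` is explicit, and
since `M` is `|a|` or `|b|`, the elementary bound `1 - 1/t ≤ log t` shows that its average over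
`[a, b]` is at least `log M - 2`. Hence the average of `min (log |x|) 0` is at least
`min (log M) 0 - 2 ≥ 2 (min (log M) 0 - 1)`, and `min (log M) 0` bounds the supremum.
-/

theorem min_log_zero_eq_log_sub_posLog (x : ℝ) : min (log x) 0 = log x - log⁺ x := by
  rw [posLog_apply]
  rcases le_total (log x) 0 with h | h <;> simp [h]

theorem mul_log_le_mul_log_add_of_abs_le {a b : ℝ} (h : |a| ≤ b) :
    a * log a ≤ a * log b + (b - a) := by
  rcases lt_trichotomy a 0 with ha | rfl | ha
  · have hb : 0 < b := (abs_pos.mpr ha.ne).trans_le h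
    have hu : 0 < -a := neg_pos.mpr ha
    have := one_sub_inv_le_log_of_pos (div_pos hu hb)
    rw [log_div hu.ne' hb.ne', inv_div, log_neg_eq_log] at this
    have := mul_le_mul_of_nonneg_left this hu.le
    rw [mul_sub, mul_one, mul_div_cancel₀ _ hu.ne'] at this
    linarith
  · simpa using h
  · have hab : a ≤ b := (le_abs_self a).trans h
    have := mul_le_mul_of_nonneg_left (log_le_log ha hab) ha.le
    linarith

theorem integral_log_ge {a b : ℝ} (hab : a ≤ b) :
    (b - a) * (log (max |a| |b|) - 2) ≤ ∫ x in a..b, log x := by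
  rw [integral_log]
  by_cases h : |a| ≤ b
  · have hM : max |a| |b| = b := by
      rw [abs_of_nonneg ((abs_nonneg a).trans h), max_eq_right h]
    have := mul_log_le_mul_log_add_of_abs_le h
    rw [hM]
    linarith
  · have ha : a < 0 := by
      by_contra! ha
      exact h ((abs_of_nonneg ha).trans_le hab)
    rw [abs_of_neg ha, not_le] at h
    have hb : |-b| ≤ -a := abs_le.mpr ⟨by linarith, by linarith⟩
    have hM : max |a| |b| = -a := by rw [abs_of_neg ha, max_eq_left (by simpa using hb)]
    have := mul_log_le_mul_log_add_of_abs_le hb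
    rw [log_neg_eq_log, log_neg_eq_log] at this
    rw [hM, log_neg_eq_log]
    linarith

theorem integral_posLog_le {a b : ℝ} (hab : a ≤ b) :
    ∫ x in a..b, log⁺ x ≤ (b - a) * log⁺ (max |a| |b|) := by
  have hle : ∀ x ∈ Icc a b, log⁺ x ≤ log⁺ (max |a| |b|) := fun x hx => by
    rw [← posLog_abs]
    exact posLog_le_posLog (abs_nonneg x) (abs_le_max_abs_abs hx.1 hx.2)
  simpa using intervalIntegral.integral_mono_on hab (continuous_posLog.intervalIntegrable a b)
    (intervalIntegrable_const (μ := MeasureTheory.volume)) hle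

theorem integral_min_log_zero_ge {a b : ℝ} (hab : a ≤ b) :
    (b - a) * (min (log (max |a| |b|)) 0 - 2) ≤ ∫ x in a..b, min (log |x|) 0 := by
  simp only [log_abs, min_log_zero_eq_log_sub_posLog]
  rw [intervalIntegral.integral_sub intervalIntegral.intervalIntegrable_log'
    (continuous_posLog.intervalIntegrable a b)]
  linarith [integral_log_ge hab, integral_posLog_le hab]

theorem sSup_image_min_log_zero_le {a b : ℝ} (hab : a < b) :
    sSup ((fun x => min (log |x|) 0) '' (Icc a b \ {0})) ≤ min (log (max |a| |b|)) 0 := by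
  refine csSup_le ?_ ?_
  · by_cases hb : b = 0
    · exact ⟨_, mem_image_of_mem _ ⟨left_mem_Icc.mpr hab.le, (hab.trans_eq hb).ne⟩⟩
    · exact ⟨_, mem_image_of_mem _ ⟨right_mem_Icc.mpr hab.le, hb⟩⟩
  · rintro _ ⟨x, ⟨hx, hx0⟩, rfl⟩
    exact min_le_min_right 0 <|
      log_le_log (abs_pos.mpr hx0) (abs_le_max_abs_abs hx.1 hx.2)

theorem stmt10 (a b : ℝ) (hab : a < b) :
    (1 / (b - a)) * ∫ x in a..b, min (Real.log |x|) 0 ≥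
      2 * (sSup ((fun x => min (Real.log |x|) 0) '' (Set.Icc a b \ {0})) - 1) := by
  have hlen : 0 < b - a := sub_pos.mpr hab
  have hsup := sSup_image_min_log_zero_le hab
  have hint := integral_min_log_zero_ge hab.le
  have hneg : min (log (max |a| |b|)) 0 ≤ 0 := min_le_right _ _
  rw [ge_iff_le, one_div, inv_mul_eq_div, le_div_iff₀ hlen]
  nlinarith
end

section
/- There exists C > 0 such that for all Λ > 2, all a, b ∈ ℂ, and a standard normal random variable N, E(log|a + bN| | N > Λ) ≥ max(log|a|, log|b|) − C log Λ. -/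
/-!
Put `t = Re (-a / b)`. For `x ≥ 1` one has `max ‖a‖ ‖b‖ ≤ 2x · max(1, |x - t|⁻¹) · ‖a + bx‖`
(compare `‖-a/b‖` with `2x`), hence pointwise
`log ‖a + bx‖ ≥ log (max ‖a‖ ‖b‖) - log 2 - log x - log⁺ |x - t|⁻¹`.
Conditionally on `N > Λ` the density of `N` is at most `2Λ` (Mills ratio:
`exp (-Λ²/2) ≤ 2Λ ∫_Λ^∞ exp (-x²/2)`), so the conditional mean of `log N` is at most
`log Λ + 1`, and, cutting the logarithmic singularity at `t` off at scale `1/Λ`, the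
conditional mean of `log⁺ |N - t|⁻¹` is at most `log Λ + 4`.
-/

open Real MeasureTheory Set Filter

lemma posLog_inv_abs_eq_indicator :
    (fun y : ℝ => log⁺ |y|⁻¹) = (Ioc (-1) 1).indicator (fun y => -log y) := by
  ext y
  by_cases hy : y ∈ Ioc (-1 : ℝ) 1
  · have h := posLog_sub_posLog_inv (x := |y|)
    rw [(posLog_eq_zero_iff _).2 (by rw [abs_abs]; exact abs_le.2 ⟨hy.1.le, hy.2⟩), log_abs] at h
    rw [indicator_of_mem hy]
    linarith
  · rw [indicator_of_notMem hy, posLog_eq_zero_iff, abs_inv, abs_abs]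
    refine inv_le_one_of_one_le₀ ?_
    simp only [mem_Ioc, not_and_or, not_lt, not_le] at hy
    rcases hy with hy | hy
    · rw [abs_of_neg (by linarith)]; linarith
    · rw [abs_of_pos (by linarith)]; linarith

lemma integrable_posLog_inv_abs : Integrable (fun y : ℝ => log⁺ |y|⁻¹) := by
  rw [posLog_inv_abs_eq_indicator, integrable_indicator_iff measurableSet_Ioc,
    ← intervalIntegrable_iff_integrableOn_Ioc_of_le (by norm_num)]
  exact intervalIntegral.intervalIntegrable_log'.neg

lemma integral_posLog_inv_abs : ∫ y : ℝ, log⁺ |y|⁻¹ = 2 := by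
  rw [posLog_inv_abs_eq_indicator, integral_indicator measurableSet_Ioc,
    ← intervalIntegral.integral_of_le (by norm_num), intervalIntegral.integral_neg, integral_log]
  norm_num

lemma posLog_inv_abs_le_add {δ : ℝ} (hδ : 0 < δ) (y : ℝ) :
    log⁺ |y|⁻¹ ≤ log⁺ δ⁻¹ + log⁺ |y / δ|⁻¹ := by
  have h : |y|⁻¹ = δ⁻¹ * |y / δ|⁻¹ := by
    rw [abs_div, abs_of_pos hδ, inv_div]
    rcases eq_or_ne y 0 with rfl | hy
    · simp
    · field_simp
  rw [h]
  exact posLog_mul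

lemma integrableOn_posLog_inv_abs_sub_mul {s : Set ℝ} (hs : MeasurableSet s) {f : ℝ → ℝ}
    (hf : AEStronglyMeasurable f (volume.restrict s)) {K : ℝ} (hfK : ∀ x ∈ s, ‖f x‖ ≤ K)
    (t : ℝ) :
    IntegrableOn (fun x => log⁺ |x - t|⁻¹ * f x) s :=
  (integrable_posLog_inv_abs.comp_sub_right t).integrableOn.mul_bdd hf
    ((ae_restrict_iff' hs).2 (Eventually.of_forall hfK))

lemma setIntegral_posLog_inv_abs_sub_mul_le {s : Set ℝ} (hs : MeasurableSet s) {f : ℝ → ℝ}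
    (hf : IntegrableOn f s) {K : ℝ} (hK : 0 ≤ K) (hfK : ∀ x ∈ s, f x ∈ Icc 0 K) (t : ℝ)
    {δ : ℝ} (hδ : 0 < δ) :
    ∫ x in s, log⁺ |x - t|⁻¹ * f x ≤ log⁺ δ⁻¹ * (∫ x in s, f x) + 2 * δ * K := by
  have hscaled : Integrable (fun x => log⁺ |(x - t) / δ|⁻¹) :=
    (integrable_posLog_inv_abs.comp_div hδ.ne').comp_sub_right t
  have hscaled_integral : ∫ x, log⁺ |(x - t) / δ|⁻¹ = 2 * δ := by
    rw [integral_sub_right_eq_self (fun u => log⁺ |u / δ|⁻¹) t,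
      Measure.integral_comp_div (fun u => log⁺ |u|⁻¹), integral_posLog_inv_abs, abs_of_pos hδ,
      smul_eq_mul, mul_comm]
  have hint : IntegrableOn (fun x => log⁺ |x - t|⁻¹ * f x) s :=
    integrableOn_posLog_inv_abs_sub_mul hs hf.aestronglyMeasurable
      (fun x hx => by rw [norm_of_nonneg (hfK x hx).1]; exact (hfK x hx).2) t
  -- `|x - t|⁻¹ = δ⁻¹ |(x - t) / δ|⁻¹` splits off `log⁺ δ⁻¹`;
  -- the rescaled singularity has mass `2δ`.
  calc ∫ x in s, log⁺ |x - t|⁻¹ * f x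
      ≤ ∫ x in s, (log⁺ δ⁻¹ * f x + K * log⁺ |(x - t) / δ|⁻¹) := by
        refine setIntegral_mono_on hint ((hf.const_mul _).add (hscaled.const_mul K).integrableOn)
          hs fun x hx => ?_
        obtain ⟨hf0, hfx⟩ := hfK x hx
        have := posLog_inv_abs_le_add hδ (x - t)
        have h0 : 0 ≤ log⁺ |(x - t) / δ|⁻¹ := posLog_nonneg
        nlinarith
    _ = log⁺ δ⁻¹ * (∫ x in s, f x) + K * ∫ x in s, log⁺ |(x - t) / δ|⁻¹ := by
        rw [integral_add (hf.const_mul _) (hscaled.const_mul K).integrableOn, integral_const_mul,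
          integral_const_mul]
    _ ≤ log⁺ δ⁻¹ * (∫ x in s, f x) + K * ∫ x, log⁺ |(x - t) / δ|⁻¹ :=
        add_le_add_right (mul_le_mul_of_nonneg_left
          (setIntegral_le_integral hscaled (.of_forall fun _ => posLog_nonneg)) hK) _
    _ = log⁺ δ⁻¹ * (∫ x in s, f x) + 2 * δ * K := by rw [hscaled_integral]; ring

lemma integrable_exp_neg_sq_div_two : Integrable fun x : ℝ => exp (-x ^ 2 / 2) := by
  convert integrable_exp_neg_mul_sq (by norm_num : (0 : ℝ) < 1 / 2) using 3; ring

lemma integrable_mul_exp_neg_sq_div_two : Integrable fun x : ℝ => x * exp (-x ^ 2 / 2) := by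
  convert integrable_mul_exp_neg_mul_sq (by norm_num : (0 : ℝ) < 1 / 2) using 4; ring

lemma tendsto_exp_neg_sq_div_two : Tendsto (fun x : ℝ => exp (-x ^ 2 / 2)) atTop (nhds 0) :=
  tendsto_exp_atBot.comp
    ((tendsto_neg_atTop_atBot.comp (tendsto_pow_atTop two_ne_zero)).atBot_div_const two_pos)

lemma hasDerivAt_neg_exp_neg_sq_div_two (x : ℝ) :
    HasDerivAt (fun y => -exp (-y ^ 2 / 2)) (x * exp (-x ^ 2 / 2)) x := by
  refine (((hasDerivAt_pow 2 x).neg.div_const 2).exp).neg.congr_deriv ?_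
  simp only [Nat.cast_ofNat, Pi.neg_apply]
  ring

lemma integral_Ioi_mul_exp_neg_sq_div_two (Λ : ℝ) :
    ∫ x in Ioi Λ, x * exp (-x ^ 2 / 2) = exp (-Λ ^ 2 / 2) := by
  rw [integral_Ioi_of_hasDerivAt_of_tendsto' (fun x _ => hasDerivAt_neg_exp_neg_sq_div_two x)
    integrable_mul_exp_neg_sq_div_two.integrableOn (by simpa using tendsto_exp_neg_sq_div_two.neg)]
  ring

lemma exp_neg_sq_div_two_le_mul_integral_Ioi {Λ : ℝ} (hΛ : 1 ≤ Λ) :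
    exp (-Λ ^ 2 / 2) ≤ 2 * Λ * ∫ x in Ioi Λ, exp (-x ^ 2 / 2) := by
  have hΛ0 : 0 < Λ := by linarith
  have hderiv : ∀ x ∈ Ici Λ, HasDerivAt (fun y => -exp (-y ^ 2 / 2) / y)
      ((1 + (x ^ 2)⁻¹) * exp (-x ^ 2 / 2)) x := fun x hx => by
    have hx : x ≠ 0 := (hΛ0.trans_le hx).ne'
    refine ((hasDerivAt_neg_exp_neg_sq_div_two x).div (hasDerivAt_id x) hx).congr_deriv ?_
    simp only [id]
    field_simp
    ring
  have hweight_le : ∀ x ∈ Ioi Λ, (1 + (x ^ 2)⁻¹) ≤ 2 := fun x hx => by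
    have : (x ^ 2)⁻¹ ≤ 1 := inv_le_one_of_one_le₀ (by nlinarith [mem_Ioi.1 hx])
    linarith
  have hint : IntegrableOn (fun x => (1 + (x ^ 2)⁻¹) * exp (-x ^ 2 / 2)) (Ioi Λ) :=
    integrable_exp_neg_sq_div_two.integrableOn.bdd_mul (by fun_prop)
      ((ae_restrict_iff' measurableSet_Ioi).2 (.of_forall fun x hx => by
        rw [norm_of_nonneg (by positivity)]; exact hweight_le x hx))
  have htend : Tendsto (fun y => -exp (-y ^ 2 / 2) / y) atTop (nhds 0) := by
    simpa using tendsto_exp_neg_sq_div_two.neg.div_atTop tendsto_id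
  have hmills := integral_Ioi_of_hasDerivAt_of_tendsto' hderiv hint htend
  have hle : ∫ x in Ioi Λ, (1 + (x ^ 2)⁻¹) * exp (-x ^ 2 / 2) ≤
      ∫ x in Ioi Λ, 2 * exp (-x ^ 2 / 2) :=
    setIntegral_mono_on hint (integrable_exp_neg_sq_div_two.const_mul 2).integrableOn
      measurableSet_Ioi fun x hx => mul_le_mul_of_nonneg_right (hweight_le x hx) (exp_pos _).le
  rw [hmills, integral_const_mul, zero_sub, neg_div, neg_neg, div_le_iff₀ hΛ0] at hle
  linarith

lemma integrableOn_log_mul_exp_neg_sq_div_two :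
    IntegrableOn (fun x => log x * exp (-x ^ 2 / 2)) (Ioi 1) :=
  integrable_of_le_of_le (by fun_prop)
    ((ae_restrict_iff' measurableSet_Ioi).2 (.of_forall fun x hx =>
      mul_nonneg (log_nonneg (le_of_lt hx)) (exp_pos _).le))
    ((ae_restrict_iff' measurableSet_Ioi).2 (.of_forall fun x hx =>
      mul_le_mul_of_nonneg_right (log_le_self (by linarith [mem_Ioi.1 hx])) (exp_pos _).le))
    (integrable_zero _ _ _) integrable_mul_exp_neg_sq_div_two.integrableOn

lemma integral_Ioi_log_mul_exp_neg_sq_div_two_le {Λ : ℝ} (hΛ : 1 ≤ Λ) :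
    ∫ x in Ioi Λ, log x * exp (-x ^ 2 / 2) ≤ (log Λ + 1) * ∫ x in Ioi Λ, exp (-x ^ 2 / 2) := by
  have hΛ0 : 0 < Λ := by linarith
  calc ∫ x in Ioi Λ, log x * exp (-x ^ 2 / 2)
      ≤ ∫ x in Ioi Λ, ((log Λ - 1) * exp (-x ^ 2 / 2) + Λ⁻¹ * (x * exp (-x ^ 2 / 2))) := by
        refine setIntegral_mono_on (integrableOn_log_mul_exp_neg_sq_div_two.mono_set
          (Ioi_subset_Ioi hΛ)) ((integrable_exp_neg_sq_div_two.const_mul _).add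
          (integrable_mul_exp_neg_sq_div_two.const_mul _)).integrableOn measurableSet_Ioi
          fun x hx => ?_
        have hx0 : 0 < x := hΛ0.trans hx
        have hlog := log_le_sub_one_of_pos (div_pos hx0 hΛ0)
        rw [log_div hx0.ne' hΛ0.ne'] at hlog
        have : log x ≤ log Λ - 1 + Λ⁻¹ * x := by rw [div_eq_inv_mul] at hlog; linarith
        nlinarith [exp_pos (-x ^ 2 / 2)]
    _ = (log Λ - 1) * (∫ x in Ioi Λ, exp (-x ^ 2 / 2)) + Λ⁻¹ * exp (-Λ ^ 2 / 2) := by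
        rw [integral_add (integrable_exp_neg_sq_div_two.const_mul _).integrableOn
          (integrable_mul_exp_neg_sq_div_two.const_mul _).integrableOn, integral_const_mul,
          integral_const_mul, integral_Ioi_mul_exp_neg_sq_div_two]
    _ ≤ (log Λ + 1) * ∫ x in Ioi Λ, exp (-x ^ 2 / 2) := by
        have hmills : Λ⁻¹ * exp (-Λ ^ 2 / 2) ≤ 2 * ∫ x in Ioi Λ, exp (-x ^ 2 / 2) := by
          rw [inv_mul_le_iff₀ hΛ0]
          linarith [exp_neg_sq_div_two_le_mul_integral_Ioi hΛ]
        linarith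

lemma integral_Ioi_posLog_mul_exp_neg_sq_div_two_le {Λ : ℝ} (hΛ : 1 ≤ Λ) (t : ℝ) :
    ∫ x in Ioi Λ, log⁺ |x - t|⁻¹ * exp (-x ^ 2 / 2) ≤
      (log Λ + 4) * ∫ x in Ioi Λ, exp (-x ^ 2 / 2) := by
  have hΛ0 : 0 < Λ := by linarith
  have hdecr : ∀ x ∈ Ioi Λ, exp (-x ^ 2 / 2) ∈ Icc 0 (exp (-Λ ^ 2 / 2)) := fun x hx =>
    ⟨(exp_pos _).le, exp_le_exp.2 (by nlinarith [mem_Ioi.1 hx])⟩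
  have h := setIntegral_posLog_inv_abs_sub_mul_le measurableSet_Ioi
    integrable_exp_neg_sq_div_two.integrableOn (exp_pos _).le hdecr t (inv_pos.2 hΛ0)
  rw [inv_inv, posLog_eq_log (by rwa [abs_of_pos hΛ0])] at h
  have hmills : Λ⁻¹ * exp (-Λ ^ 2 / 2) ≤ 2 * ∫ x in Ioi Λ, exp (-x ^ 2 / 2) := by
    rw [inv_mul_le_iff₀ hΛ0]
    linarith [exp_neg_sq_div_two_le_mul_integral_Ioi hΛ]
  linarith

lemma max_norm_le_mul_norm_add_mul (a b : ℂ) {x : ℝ} (hx : 1 ≤ x) (hxt : x ≠ (-a / b).re) :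
    max ‖a‖ ‖b‖ ≤ 2 * x * max 1 |x - (-a / b).re|⁻¹ * ‖a + b * x‖ := by
  have htwo : ∀ c : ℝ, 2 ≤ 2 * x * max 1 c := fun c =>
    calc (2 : ℝ) ≤ 2 * x := by linarith
      _ ≤ 2 * x * max 1 c := le_mul_of_one_le_right (by linarith) (le_max_left _ _)
  rcases eq_or_ne b 0 with rfl | hb
  · simpa using le_mul_of_one_le_left (norm_nonneg a) ((htwo _).trans' one_le_two)
  set z := -a / b
  have hb0 : 0 < ‖b‖ := norm_pos_iff.2 hb
  have hab : a + b * x = b * (x - z) := by simp only [z]; field_simp; ring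
  have hmax : max ‖a‖ ‖b‖ = ‖b‖ * max 1 ‖z‖ := by
    rw [mul_max_of_nonneg _ _ hb0.le, mul_one, max_comm, norm_div, norm_neg,
      mul_div_cancel₀ _ hb0.ne']
  rw [hab, hmax, norm_mul, mul_left_comm]
  refine mul_le_mul_of_nonneg_left ?_ hb0.le
  rcases le_or_gt ‖z‖ (2 * x) with hz | hz
  · have hre : |x - z.re| ≤ ‖(x : ℂ) - z‖ := by simpa using Complex.abs_re_le_norm ((x : ℂ) - z)
    have hpos : 0 < |x - z.re| := abs_pos.2 (sub_ne_zero.2 hxt)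
    have : 1 ≤ max 1 |x - z.re|⁻¹ * ‖(x : ℂ) - z‖ :=
      calc 1 = |x - z.re|⁻¹ * |x - z.re| := (inv_mul_cancel₀ hpos.ne').symm
        _ ≤ max 1 |x - z.re|⁻¹ * ‖(x : ℂ) - z‖ :=
          mul_le_mul (le_max_right _ _) hre hpos.le (by positivity)
    calc max 1 ‖z‖ ≤ 2 * x := max_le (by linarith) hz
      _ ≤ 2 * x * (max 1 |x - z.re|⁻¹ * ‖(x : ℂ) - z‖) := le_mul_of_one_le_right (by linarith) this
      _ = _ := by ring
  · have hdist : ‖z‖ ≤ 2 * ‖(x : ℂ) - z‖ := by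
      have := norm_sub_norm_le z (x : ℂ)
      rw [Complex.norm_of_nonneg (by linarith), norm_sub_rev] at this
      linarith
    rw [max_eq_right (by linarith)]
    exact hdist.trans (mul_le_mul_of_nonneg_right (htwo _) (norm_nonneg _))

lemma log_max_norm_le_log_norm_add_mul (a b : ℂ) {x : ℝ} (hx : 1 ≤ x) (hxt : x ≠ (-a / b).re) :
    log (max ‖a‖ ‖b‖) ≤ log ‖a + b * x‖ + log 2 + log x + log⁺ |x - (-a / b).re|⁻¹ := by
  have hx0 : 0 < x := by linarith
  have hrest : 0 ≤ log 2 + log x + log⁺ |x - (-a / b).re|⁻¹ := by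
    linarith [log_nonneg one_le_two, log_nonneg hx, posLog_nonneg (x := |x - (-a / b).re|⁻¹)]
  rcases (le_max_of_le_left (norm_nonneg a) : 0 ≤ max ‖a‖ ‖b‖).eq_or_lt with hM | hM
  · -- `a = b = 0`, and both sides are read with `log 0 = 0`.
    obtain ⟨rfl, rfl⟩ : a = 0 ∧ b = 0 := by simpa using max_le_iff.1 hM.ge
    simpa using hrest
  have hbound := max_norm_le_mul_norm_add_mul a b hx hxt
  have hpos : 0 < ‖a + b * x‖ := pos_of_mul_pos_right (hM.trans_le hbound) (by positivity)
  calc log (max ‖a‖ ‖b‖) ≤ log (2 * x * max 1 |x - (-a / b).re|⁻¹ * ‖a + b * x‖) :=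
        log_le_log hM hbound
    _ = _ := by
        rw [log_mul (by positivity) hpos.ne', log_mul (by positivity) (by positivity),
          log_mul two_ne_zero hx0.ne', ← posLog_eq_log_max_one (by positivity)]
        ring

lemma le_integral_Ioi_log_norm_add_mul_mul_exp (a b : ℂ) {Λ : ℝ} (hΛ : 1 ≤ Λ) :
    (log (max ‖a‖ ‖b‖) - log 2 - 2 * log Λ - 5) * ∫ x in Ioi Λ, exp (-x ^ 2 / 2) ≤
      ∫ x in Ioi Λ, log ‖a + b * x‖ * exp (-x ^ 2 / 2) := by
  set t := (-a / b).re
  have hw := integrable_exp_neg_sq_div_two.integrableOn (s := Ioi Λ)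
  have hlog := integrableOn_log_mul_exp_neg_sq_div_two.mono_set (Ioi_subset_Ioi hΛ)
  have hposLog : IntegrableOn (fun x => log⁺ |x - t|⁻¹ * exp (-x ^ 2 / 2)) (Ioi Λ) :=
    integrableOn_posLog_inv_abs_sub_mul measurableSet_Ioi (by fun_prop)
      (fun x _ => by rw [norm_of_nonneg (exp_pos _).le]; exact exp_le_one_iff.2 (by nlinarith)) t
  set c := log (max ‖a‖ ‖b‖) - log 2
  have hcw : IntegrableOn (fun x => c * exp (-x ^ 2 / 2) - log x * exp (-x ^ 2 / 2)) (Ioi Λ) :=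
    (hw.const_mul c).sub hlog
  set g := fun x : ℝ =>
    c * exp (-x ^ 2 / 2) - log x * exp (-x ^ 2 / 2) - log⁺ |x - t|⁻¹ * exp (-x ^ 2 / 2)
  have hg : IntegrableOn g (Ioi Λ) := hcw.sub hposLog
  have hlower : ∀ᵐ x : ℝ ∂volume.restrict (Ioi Λ), g x ≤ log ‖a + b * x‖ * exp (-x ^ 2 / 2) := by
    filter_upwards [ae_restrict_mem measurableSet_Ioi,
      ae_restrict_of_ae (Measure.ae_ne volume t)] with x hx hxt
    have := log_max_norm_le_log_norm_add_mul a b (hΛ.trans (mem_Ioi.1 hx).le) hxt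
    simp only [g]
    nlinarith [exp_pos (-x ^ 2 / 2)]
  have hupper : ∀ᵐ x : ℝ ∂volume.restrict (Ioi Λ),
      log ‖a + b * x‖ * exp (-x ^ 2 / 2) ≤
        ‖a‖ * exp (-x ^ 2 / 2) + ‖b‖ * (x * exp (-x ^ 2 / 2)) := by
    filter_upwards [ae_restrict_mem measurableSet_Ioi] with x hx
    have hx0 : 0 ≤ x := by linarith [mem_Ioi.1 hx]
    have : ‖a + b * x‖ ≤ ‖a‖ + ‖b‖ * x := by
      simpa [abs_of_nonneg hx0] using norm_add_le a (b * x)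
    nlinarith [log_le_self (norm_nonneg (a + b * x)), exp_pos (-x ^ 2 / 2)]
  have hf : IntegrableOn (fun x : ℝ => log ‖a + b * x‖ * exp (-x ^ 2 / 2)) (Ioi Λ) :=
    integrable_of_le_of_le (by fun_prop) hlower hupper hg
      ((hw.const_mul _).add (integrable_mul_exp_neg_sq_div_two.integrableOn.const_mul _))
  calc (log (max ‖a‖ ‖b‖) - log 2 - 2 * log Λ - 5) * ∫ x in Ioi Λ, exp (-x ^ 2 / 2)
      ≤ c * (∫ x in Ioi Λ, exp (-x ^ 2 / 2)) -
          (∫ x in Ioi Λ, log x * exp (-x ^ 2 / 2)) -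
          ∫ x in Ioi Λ, log⁺ |x - t|⁻¹ * exp (-x ^ 2 / 2) := by
        linarith [integral_Ioi_log_mul_exp_neg_sq_div_two_le hΛ,
          integral_Ioi_posLog_mul_exp_neg_sq_div_two_le hΛ t]
    _ = ∫ x in Ioi Λ, g x := by
        rw [integral_sub hcw hposLog, integral_sub (hw.const_mul c) hlog, integral_const_mul]
    _ ≤ ∫ x in Ioi Λ, log ‖a + b * x‖ * exp (-x ^ 2 / 2) :=
        setIntegral_mono_ae_restrict hg hf hlower

theorem stmt11 :
    ∃ C : ℝ, 0 < C ∧ ∀ Λ : ℝ, 2 < Λ → ∀ a b : ℂ,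
      (∫ x in Set.Ioi Λ, Real.log (‖a + b * (x : ℂ)‖) * Real.exp (-x ^ 2 / 2)) /
          (∫ x in Set.Ioi Λ, Real.exp (-x ^ 2 / 2)) ≥
        Real.log (max ‖a‖ ‖b‖) - C * Real.log Λ := by
  refine ⟨11, by norm_num, fun Λ hΛ a b => ?_⟩
  have hΛ1 : 1 ≤ Λ := by linarith
  have hD : 0 < ∫ x in Ioi Λ, exp (-x ^ 2 / 2) := by
    have := (exp_pos _).trans_le (exp_neg_sq_div_two_le_mul_integral_Ioi hΛ1)
    exact pos_of_mul_pos_right this (by linarith)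
  have hlogΛ : log 2 < log Λ := log_lt_log two_pos hΛ
  rw [ge_iff_le, le_div_iff₀ hD]
  refine le_trans (mul_le_mul_of_nonneg_right ?_ hD.le)
    (le_integral_Ioi_log_norm_add_mul_mul_exp a b hΛ1)
  linarith [log_two_gt_d9]
end

section
/- Let σ be an ergodic measure-preserving transformation of a probability space (Σ, P) and let (f_n) be a sub-additive sequence of integrable functions (f_{n+m}(ω) ≤ f_n(σ^m ω) + f_m(ω) for all ω and n,m > 0) with inf_n (1/n) ∫ f_n dP > −∞. Then for every ε > 0 there exist χ > 0 and n_0 ∈ ℕ such that for all M ≥ n_0 and all measurable sets A with P(A) < χ, one has ∫_A f_M dP > −ε M. -/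
/-!
Let `α = inf_n (1/n) ∫ f_n`, fix `N` with `(1/N) ∫ f_N < α + ε/4`, and write `M = N q + r` with
`1 ≤ r ≤ N`. Sub-additivity bounds `f_M` by the `q` blocks `f_N ∘ σ^t` plus `f_r`. On `Aᶜ` each
block integrates to at most `∫ f_N + ∫_A |f_N ∘ σ^t|`, and since `σ^t` preserves `P` the last term
is small uniformly in `t` once `P(A)` is small (truncate `|f_N|` at a level `K`). Hence
`∫_{Aᶜ} f_M ≤ q N (α + ε/2) + O(1)`, while `∫ f_M ≥ M α = (q N + r) α`; subtracting gives
`∫_A f_M ≥ -ε M/2 - O(1)`.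
-/

open MeasureTheory Filter Topology

section Truncation

variable {α : Type*} [MeasurableSpace α] {μ : Measure α} {g : α → ℝ}

theorem tendsto_integral_max_sub_zero_atTop (hg : Integrable g μ) :
    Tendsto (fun K : ℝ => ∫ x, max (g x - K) 0 ∂μ) atTop (𝓝 0) := by
  have h := tendsto_integral_filter_of_dominated_convergence (μ := μ) (l := atTop)
    (F := fun K x => max (g x - K) 0) (f := fun _ => (0 : ℝ)) (fun x => |g x|)
    (Eventually.of_forall fun K =>
      (hg.aestronglyMeasurable.sub aestronglyMeasurable_const).sup aestronglyMeasurable_const)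
    ((eventually_ge_atTop 0).mono fun K hK => Eventually.of_forall fun x => by
      rw [Real.norm_of_nonneg (le_max_right _ _)]
      exact max_le (by linarith [le_abs_self (g x)]) (abs_nonneg _))
    hg.abs
    (Eventually.of_forall fun x => tendsto_const_nhds.congr' <|
      (eventually_ge_atTop (g x)).mono fun K hK => (max_eq_right (by linarith)).symm)
  simpa using h

variable {T : α → α}

theorem MeasureTheory.MeasurePreserving.integral_comp_of_aestronglyMeasurable
    (hT : MeasurePreserving T μ μ) {h : α → ℝ} (hh : AEStronglyMeasurable h μ) :
    ∫ x, h (T x) ∂μ = ∫ x, h x ∂μ := by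
  rw [← hT.map_eq] at hh
  rw [← integral_map hT.aemeasurable hh, hT.map_eq]

theorem setIntegral_compl_comp_le (hT : MeasurePreserving T μ μ) (hg : Integrable g μ)
    {A : Set α} (hA : MeasurableSet A) :
    ∫ x in Aᶜ, g (T x) ∂μ ≤ ∫ x, g x ∂μ + ∫ x in A, |g (T x)| ∂μ := by
  have hsplit := integral_add_compl (f := fun x => g (T x)) hA (hT.integrable_comp_of_integrable hg)
  rw [hT.integral_comp_of_aestronglyMeasurable hg.aestronglyMeasurable] at hsplit
  have hA_ge : -∫ x in A, |g (T x)| ∂μ ≤ ∫ x in A, g (T x) ∂μ :=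
    neg_le_of_abs_le abs_integral_le_integral_abs
  linarith

variable [IsFiniteMeasure μ]

theorem setIntegral_abs_comp_le (hT : MeasurePreserving T μ μ) (hg : Integrable g μ)
    (A : Set α) (K : ℝ) :
    ∫ x in A, |g (T x)| ∂μ ≤ K * μ.real A + ∫ x, max (|g x| - K) 0 ∂μ := by
  have htail : Integrable (fun x => max (|g x| - K) 0) μ :=
    (hg.abs.sub (integrable_const K)).pos_part
  have htailT : Integrable (fun x => max (|g (T x)| - K) 0) μ :=
    hT.integrable_comp_of_integrable htail
  calc ∫ x in A, |g (T x)| ∂μ ≤ ∫ x in A, (K + max (|g (T x)| - K) 0) ∂μ :=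
        setIntegral_mono (hT.integrable_comp_of_integrable hg).abs.integrableOn
          ((integrable_const K).add htailT).integrableOn fun x => by
            linarith [le_max_left (|g (T x)| - K) 0]
    _ = K * μ.real A + ∫ x in A, max (|g (T x)| - K) 0 ∂μ := by
        rw [integral_add (integrable_const K).integrableOn htailT.integrableOn,
          setIntegral_const, smul_eq_mul, mul_comm]
    _ ≤ K * μ.real A + ∫ x, max (|g (T x)| - K) 0 ∂μ := by
        gcongr
        · exact Eventually.of_forall fun x => le_max_right _ _
        · exact Measure.restrict_le_self
    _ = K * μ.real A + ∫ x, max (|g x| - K) 0 ∂μ := by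
        rw [hT.integral_comp_of_aestronglyMeasurable htail.aestronglyMeasurable]

theorem exists_pos_forall_setIntegral_abs_comp_lt (hg : Integrable g μ) {ε : ℝ} (hε : 0 < ε) :
    ∃ δ > (0 : ℝ), ∀ T : α → α, MeasurePreserving T μ μ →
      ∀ A : Set α, μ A < ENNReal.ofReal δ → ∫ x in A, |g (T x)| ∂μ < ε := by
  obtain ⟨K, hK0, hK⟩ := ((eventually_ge_atTop 0).and
    ((tendsto_integral_max_sub_zero_atTop hg.abs).eventually_lt_const (half_pos hε))).exists
  refine ⟨ε / (2 * (K + 1)), by positivity, fun T hT A hA => ?_⟩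
  have hAδ : μ.real A < ε / (2 * (K + 1)) := ENNReal.toReal_lt_of_lt_ofReal hA
  have hKA : K * μ.real A < ε / 2 := by
    calc K * μ.real A ≤ (K + 1) * μ.real A := by gcongr; linarith
      _ < (K + 1) * (ε / (2 * (K + 1))) := by gcongr
      _ = ε / 2 := by field_simp
  linarith [setIntegral_abs_comp_le hT hg A K]

end Truncation

theorem exists_pos_forall_div_lt_div_add {a : ℕ → ℝ} (ha : ∃ L, ∀ n, 0 < n → L ≤ a n / n)
    {ε : ℝ} (hε : 0 < ε) : ∃ N, 0 < N ∧ ∀ M, 0 < M → a N / N < a M / M + ε := by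
  obtain ⟨L, hL⟩ := ha
  have hbdd : BddBelow (Set.range fun n : ℕ => a (n + 1) / ↑(n + 1)) :=
    ⟨L, Set.forall_mem_range.2 fun n => hL _ n.succ_pos⟩
  obtain ⟨n, hn⟩ := exists_lt_of_ciInf_lt (lt_add_of_pos_right (⨅ n : ℕ, a (n + 1) / ↑(n + 1)) hε)
  refine ⟨n + 1, n.succ_pos, fun M hM => ?_⟩
  obtain ⟨m, rfl⟩ := Nat.exists_eq_add_of_lt hM
  have := ciInf_le hbdd m
  simp only [zero_add] at this ⊢
  linarith

section Subadditive

variable {Ω : Type*} {σ : Ω → Ω} {f : ℕ → Ω → ℝ}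
  (hsub : ∀ n m : ℕ, 0 < n → 0 < m → ∀ ω, f (n + m) ω ≤ f n (σ^[m] ω) + f m ω)
include hsub

theorem apply_mul_add_le_sum_iterate_add {N r : ℕ} (hN : 0 < N) (hr : 0 < r) (q : ℕ) (ω : Ω) :
    f (N * q + r) ω ≤ ∑ j ∈ Finset.range q, f N (σ^[r + j * N] ω) + f r ω := by
  induction q with
  | zero => simp
  | succ q ih =>
    have := hsub N (N * q + r) hN (by positivity) ω
    rw [Finset.sum_range_succ, show r + q * N = N * q + r by ring,
      show N * (q + 1) + r = N + (N * q + r) by ring]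
    linarith

variable [MeasurableSpace Ω] {P : Measure Ω}

theorem setIntegral_compl_le_of_subadditive (hσ : MeasurePreserving σ P P)
    (hint : ∀ n, Integrable (f n) P) {A : Set Ω} (hA : MeasurableSet A) {η : ℝ}
    {N r : ℕ} (hN : 0 < N) (hr : 0 < r)
    (hη : ∀ T : Ω → Ω, MeasurePreserving T P P → ∫ ω in A, |f N (T ω)| ∂P ≤ η) (q : ℕ) :
    ∫ ω in Aᶜ, f (N * q + r) ω ∂P ≤ q * (∫ ω, f N ω ∂P + η) + ∫ ω, |f r ω| ∂P := by
  have hblock (j : ℕ) : Integrable (fun ω => f N (σ^[r + j * N] ω)) P :=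
    (hσ.iterate _).integrable_comp_of_integrable (hint N)
  calc ∫ ω in Aᶜ, f (N * q + r) ω ∂P
      ≤ ∫ ω in Aᶜ, (∑ j ∈ Finset.range q, f N (σ^[r + j * N] ω) + f r ω) ∂P :=
        setIntegral_mono (hint _).integrableOn
          ((integrable_finsetSum _ fun j _ => hblock j).add (hint r)).integrableOn
          (apply_mul_add_le_sum_iterate_add hsub hN hr q)
    _ = ∑ j ∈ Finset.range q, ∫ ω in Aᶜ, f N (σ^[r + j * N] ω) ∂P + ∫ ω in Aᶜ, f r ω ∂P := by
        rw [integral_add (integrable_finsetSum _ fun j _ => hblock j).integrableOn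
          (hint r).integrableOn, integral_finsetSum _ fun j _ => (hblock j).integrableOn]
    _ ≤ ∑ _j ∈ Finset.range q, (∫ ω, f N ω ∂P + η) + ∫ ω, |f r ω| ∂P := by
        gcongr with j
        · exact (setIntegral_compl_comp_le (hσ.iterate _) (hint N) hA).trans
            (add_le_add_right (hη _ (hσ.iterate _)) _)
        · exact (setIntegral_mono (hint r).integrableOn (hint r).abs.integrableOn
            fun ω => le_abs_self _).trans
            (setIntegral_le_integral (hint r).abs (Eventually.of_forall fun ω => abs_nonneg _))
    _ = q * (∫ ω, f N ω ∂P + η) + ∫ ω, |f r ω| ∂P := by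
        rw [Finset.sum_const, Finset.card_range, nsmul_eq_mul]

theorem neg_mul_lt_setIntegral_of_subadditive (hσ : MeasurePreserving σ P P)
    (hint : ∀ n, Integrable (f n) P) {L ε : ℝ} (hε : 0 < ε)
    (hL : ∀ n, 0 < n → L ≤ (∫ ω, f n ω ∂P) / n) {N : ℕ} (hN : 0 < N)
    (hNM : ∀ M, 0 < M → (∫ ω, f N ω ∂P) / N < (∫ ω, f M ω ∂P) / M + ε / 4)
    {A : Set Ω} (hA : MeasurableSet A)
    (hη : ∀ T : Ω → Ω, MeasurePreserving T P P → ∫ ω in A, |f N (T ω)| ∂P ≤ ε * N / 4)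
    {M : ℕ} (hM : 2 * (∑ r ∈ Finset.Icc 1 N, ∫ ω, |f r ω| ∂P + N * |L|) / ε < M) :
    -(ε * M) < ∫ ω in A, f M ω ∂P := by
  set B := ∑ r ∈ Finset.Icc 1 N, ∫ ω, |f r ω| ∂P
  -- the remainder lies in `[1, N]`, not `[0, N)`: sub-additivity says nothing about `f 0`
  obtain ⟨q, r, hr, hrN, rfl⟩ : ∃ q r, 0 < r ∧ r ≤ N ∧ M = N * q + r :=
    ⟨(M - 1) / N, (M - 1) % N + 1, by omega, Nat.mod_lt _ hN, by
      have := Nat.div_add_mod (M - 1) N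
      have : 0 < M := by exact_mod_cast (div_nonneg (by positivity) hε.le).trans_lt hM
      omega⟩
  have hcompl := setIntegral_compl_le_of_subadditive hsub hσ hint hA hN hr hη q
  have hrB : ∫ ω, |f r ω| ∂P ≤ B :=
    Finset.single_le_sum (f := fun n => ∫ ω, |f n ω| ∂P)
      (fun n _ => integral_nonneg fun ω => abs_nonneg (f n ω)) (Finset.mem_Icc.2 ⟨hr, hrN⟩)
  have hsplit := integral_add_compl hA (hint (N * q + r))
  set x := (∫ ω, f (N * q + r) ω ∂P) / ↑(N * q + r)
  have hMpos : (0 : ℝ) < ↑(N * q + r) := by positivity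
  have hNpos : (0 : ℝ) < N := by positivity
  have haM : ∫ ω, f (N * q + r) ω ∂P = ↑(N * q + r) * x := (mul_div_cancel₀ _ hMpos.ne').symm
  have haN : ∫ ω, f N ω ∂P ≤ N * (x + ε / 4) := by
    have := hNM (N * q + r) (by positivity)
    rw [div_lt_iff₀ hNpos] at this
    linarith
  have hqaN : q * ∫ ω, f N ω ∂P ≤ q * (N * (x + ε / 4)) := by gcongr
  have hrx : -(N * |L|) ≤ r * x := by
    have hLx : L ≤ x := hL _ (by positivity)
    have hrN' : (r : ℝ) ≤ N := by exact_mod_cast hrN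
    nlinarith [neg_abs_le L, abs_nonneg L]
  have hlarge : B + N * |L| < ε * ↑(N * q + r) / 2 := by
    rw [div_lt_iff₀ hε] at hM
    linarith
  have hrε : 0 ≤ (r : ℝ) * ε := by positivity
  push_cast at haM hlarge ⊢
  linarith

end Subadditive

theorem stmt18 {Ω : Type*} [MeasurableSpace Ω] (P : Measure Ω) [IsProbabilityMeasure P]
    (σ : Ω → Ω) (hσ : Ergodic σ P)
    (f : ℕ → Ω → ℝ) (hint : ∀ n, Integrable (f n) P)
    (hsub : ∀ (n m : ℕ), 0 < n → 0 < m → ∀ ω, f (n + m) ω ≤ f n (σ^[m] ω) + f m ω)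
    (hbdd : ∃ L : ℝ, ∀ n : ℕ, 0 < n → L ≤ (1 / (n : ℝ)) * ∫ ω, f n ω ∂P) :
    ∀ ε > (0 : ℝ), ∃ χ > (0 : ℝ), ∃ n₀ : ℕ, ∀ M : ℕ, n₀ ≤ M →
      ∀ A : Set Ω, MeasurableSet A → P A < ENNReal.ofReal χ →
        (∫ ω in A, f M ω ∂P) > -(ε * M) := by
  intro ε hε
  obtain ⟨L, hL⟩ := hbdd
  simp only [one_div_mul_eq_div] at hL
  obtain ⟨N, hN, hNM⟩ := exists_pos_forall_div_lt_div_add ⟨L, hL⟩ (by positivity : 0 < ε / 4)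
  obtain ⟨δ, hδ, hsmall⟩ :=
    exists_pos_forall_setIntegral_abs_comp_lt (hint N) (by positivity : 0 < ε * N / 4)
  refine ⟨δ, hδ, ⌈2 * (∑ r ∈ Finset.Icc 1 N, ∫ ω, |f r ω| ∂P + N * |L|) / ε⌉₊ + 1,
    fun M hM A hA hPA => ?_⟩
  exact neg_mul_lt_setIntegral_of_subadditive hsub hσ.toMeasurePreserving hint hε hL hN hNM hA
    (fun T hT => (hsmall T hT A hPA).le) (Nat.lt_of_ceil_lt (Nat.lt_of_succ_le hM))
end
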